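/- arXiv:math/9905191 — 3 statements merged into one kernel-verified Lean document; each statement's English description precedes it below -/
import Mathlib

section
/- Let p be an odd prime. Consider the action of (ℤ/p)ˣ × (ℤ/p)ˣ on M := (ℤ/p)ˣ × (ℤ/p)ˣ × ℤ/p defined by (r,t)·(a,b,c) = (t·a·r⁻¹, b·(r·t)⁻¹, c·r⁻¹). Then M decomposes into exactly p + 1 orbits under this action. -/
section aux
variable {p : ℕ} [Fact p.Prime]

lemma unit_isSquare_of_val {u : (ZMod p)ˣ} (h : IsSquare (u : ZMod p)) : IsSquare u := by
  obtain ⟨s, hs⟩ := h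
  have hs0 : s ≠ 0 := by rintro rfl; simp at hs
  exact ⟨Units.mk0 s hs0, Units.ext (by simpa using hs)⟩

lemma square_ratio {u v : (ZMod p)ˣ} (hp : Odd p)
    (h : IsSquare u ↔ IsSquare v) : ∃ r : (ZMod p)ˣ, r * r = u * v⁻¹ := by
  by_cases hu : IsSquare u
  · obtain ⟨s, hs⟩ := hu
    obtain ⟨w, hw⟩ := h.mp ⟨s, hs⟩
    exact ⟨s * w⁻¹, by rw [hs, hw, mul_inv_rev]; exact mul_mul_mul_comm s w⁻¹ s w⁻¹⟩
  · have hchar : ringChar (ZMod p) ≠ 2 := by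
      rw [ZMod.ringChar_zmod_n]; rintro rfl; revert hp; decide
    have hv : ¬ IsSquare v := fun hv => hu (h.mpr hv)
    have hu' : ¬ IsSquare (u : ZMod p) := fun h' => hu (unit_isSquare_of_val h')
    have hv' : ¬ IsSquare (v : ZMod p) := fun h' => hv (unit_isSquare_of_val h')
    have cu := (quadraticChar_neg_one_iff_not_isSquare (F := ZMod p)).mpr hu'
    have cv := (quadraticChar_neg_one_iff_not_isSquare (F := ZMod p)).mpr hv'
    have key : quadraticChar (ZMod p) ((u : ZMod p) * (v⁻¹ : (ZMod p)ˣ)) = 1 := by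
      rw [map_mul, cu]
      have : quadraticChar (ZMod p) ((v : ZMod p) * (v⁻¹ : (ZMod p)ˣ)) = 1 := by
        rw [Units.mul_inv]; exact map_one _
      rw [map_mul, cv] at this
      linarith
    have h0 : ((u : ZMod p) * (v⁻¹ : (ZMod p)ˣ)) ≠ 0 :=
      mul_ne_zero u.ne_zero (v⁻¹).ne_zero
    have := (quadraticChar_one_iff_isSquare h0).mp key
    obtain ⟨r, hr⟩ := unit_isSquare_of_val (u := u * v⁻¹) (by rw [Units.val_mul]; exact this)
    exact ⟨r, hr.symm⟩

lemma isSquare_mul_sq_iff (x w : (ZMod p)ˣ) : IsSquare (x * (w * w)) ↔ IsSquare x := by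
  constructor
  · rintro ⟨s, hs⟩
    refine ⟨s * w⁻¹, ?_⟩
    have h0 := congrArg (Units.val) hs
    apply Units.ext
    simp only [Units.val_mul, Units.val_inv_eq_inv_val] at h0 ⊢
    field_simp
    linear_combination h0
  · rintro ⟨s, hs⟩
    exact ⟨s * w, by rw [hs]; exact mul_mul_mul_comm s s w w⟩

open Classical in
noncomputable def fM (p : ℕ) [Fact p.Prime] (x : (ZMod p)ˣ × (ZMod p)ˣ × ZMod p) :
    Option (ZMod p) :=
  if x.2.2 = 0 then (if IsSquare (x.1 * x.2.1) then none else some 0)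
  else some ((x.1 : ZMod p) * (x.2.1 : ZMod p) * (x.2.2)⁻¹ * (x.2.2)⁻¹)

lemma fM_const : ∀ x y : (ZMod p)ˣ × (ZMod p)ˣ × ZMod p,
    (∃ r t : (ZMod p)ˣ,
        y = (t * x.1 * r⁻¹, x.2.1 * (r * t)⁻¹, x.2.2 * ((r⁻¹ : (ZMod p)ˣ) : ZMod p))) →
    fM p x = fM p y := by
  rintro ⟨a, b, c⟩ y ⟨r, t, rfl⟩
  simp only [fM]
  by_cases hc : c = 0
  · subst hc
    rw [if_pos rfl, if_pos (zero_mul _)]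
    have hid : t * a * r⁻¹ * (b * (r * t)⁻¹) = a * b * (r⁻¹ * r⁻¹) := by
      apply Units.ext
      simp only [Units.val_mul, Units.val_inv_eq_inv_val]
      field_simp
    have hsq : IsSquare (t * a * r⁻¹ * (b * (r * t)⁻¹)) ↔ IsSquare (a * b) := by
      rw [hid]; exact isSquare_mul_sq_iff (a * b) r⁻¹
    by_cases h1 : IsSquare (a * b)
    · rw [if_pos h1, if_pos (hsq.mpr h1)]
    · rw [if_neg h1, if_neg (fun hh => h1 (hsq.mp hh))]
  · have hcr : c * ((r⁻¹ : (ZMod p)ˣ) : ZMod p) ≠ 0 :=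
      mul_ne_zero hc (r⁻¹ : (ZMod p)ˣ).ne_zero
    rw [if_neg hc, if_neg hcr]
    congr 1
    simp only [Units.val_mul, Units.val_inv_eq_inv_val, mul_inv_rev, inv_inv]
    field_simp
end aux

/-- For an odd prime `p`, the set `(ℤ/p)ˣ × (ℤ/p)ˣ × ℤ/p` decomposes into exactly `p + 1`
orbits under the action `(r, t) • (a, b, c) = (t * a * r⁻¹, b * (r * t)⁻¹, c * r⁻¹)`. -/
theorem orbit_count_M (p : ℕ) [Fact p.Prime] (hp : Odd p) :
    Nat.card (Quot (fun x y : (ZMod p)ˣ × (ZMod p)ˣ × ZMod p =>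
      ∃ r t : (ZMod p)ˣ,
        y = (t * x.1 * r⁻¹, x.2.1 * (r * t)⁻¹, x.2.2 * ((r⁻¹ : (ZMod p)ˣ) : ZMod p)))) =
      p + 1 := by
  classical
  have hchar : ringChar (ZMod p) ≠ 2 := by
    rw [ZMod.ringChar_zmod_n]; rintro rfl; revert hp; decide
  set G := (Quot.lift (fM p) fM_const :
    Quot (fun x y : (ZMod p)ˣ × (ZMod p)ˣ × ZMod p =>
      ∃ r t : (ZMod p)ˣ,
        y = (t * x.1 * r⁻¹, x.2.1 * (r * t)⁻¹, x.2.2 * ((r⁻¹ : (ZMod p)ˣ) : ZMod p))) →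
      Option (ZMod p)) with hG
  have hinj : Function.Injective G := by
    refine Quot.ind fun x => Quot.ind fun y h => ?_
    change fM p x = fM p y at h
    refine Quot.sound ?_
    obtain ⟨a, b, c⟩ := x
    obtain ⟨a', b', c'⟩ := y
    have hyne : ∀ (u v : (ZMod p)ˣ) (d : ZMod p), d ≠ 0 →
        (u : ZMod p) * v * d⁻¹ * d⁻¹ ≠ 0 := fun u v d hd =>
      mul_ne_zero (mul_ne_zero (mul_ne_zero u.ne_zero v.ne_zero) (inv_ne_zero hd))
        (inv_ne_zero hd)
    by_cases hc : c = 0 <;> by_cases hc' : c' = 0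
    · -- both zero
      subst hc; subst hc'
      simp only [fM, if_pos rfl] at h
      have hsq : IsSquare (a * b) ↔ IsSquare (a' * b') := by
        by_cases h1 : IsSquare (a * b) <;> by_cases h2 : IsSquare (a' * b') <;>
          simp [h1, h2] at h ⊢
      obtain ⟨r, hr⟩ := square_ratio hp hsq
      refine ⟨r, a' * r * a⁻¹, ?_⟩
      simp only [Prod.mk.injEq]
      refine ⟨?_, ?_, by rw [zero_mul]⟩
      · apply Units.ext
        simp only [Units.val_mul, Units.val_inv_eq_inv_val]
        field_simp
      · have h0 := congrArg (Units.val) hr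
        apply Units.ext
        simp only [Units.val_mul, Units.val_inv_eq_inv_val] at h0 ⊢
        field_simp at h0 ⊢
        linear_combination h0
    · -- c = 0, c' ≠ 0 : contradiction
      exfalso
      subst hc
      simp only [fM, if_pos rfl, if_neg hc'] at h
      by_cases h1 : IsSquare (a * b)
      · rw [if_pos h1] at h; simp at h
      · rw [if_neg h1] at h
        exact hyne a' b' c' hc' (Option.some.inj h).symm
    · -- c ≠ 0, c' = 0 : contradiction
      exfalso
      subst hc'
      simp only [fM, if_pos rfl, if_neg hc] at h
      by_cases h1 : IsSquare (a' * b')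
      · rw [if_pos h1] at h; simp at h
      · rw [if_neg h1] at h
        exact hyne a b c hc (Option.some.inj h)
    · -- both nonzero
      simp only [fM, if_neg hc, if_neg hc'] at h
      have hfield := Option.some.inj h
      refine ⟨Units.mk0 c hc * (Units.mk0 c' hc')⁻¹,
        a' * (Units.mk0 c hc * (Units.mk0 c' hc')⁻¹) * a⁻¹, ?_⟩
      simp only [Prod.mk.injEq]
      refine ⟨?_, ?_, ?_⟩
      · apply Units.ext
        simp only [Units.val_mul, Units.val_inv_eq_inv_val, Units.val_mk0]
        field_simp
      · apply Units.ext
        simp only [Units.val_mul, Units.val_inv_eq_inv_val, Units.val_mk0]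
        field_simp at hfield ⊢
        linear_combination -hfield
      · simp only [Units.val_mul, Units.val_inv_eq_inv_val, Units.val_mk0, mul_inv_rev,
          inv_inv]
        field_simp
  have hsurj : Function.Surjective G := by
    rintro (_ | v)
    · refine ⟨Quot.mk _ (1, 1, 0), ?_⟩
      show fM p (1, 1, 0) = none
      simp [fM]
    · by_cases hv : v = 0
      · subst hv
        obtain ⟨n, hn⟩ := FiniteField.exists_nonsquare (F := ZMod p) hchar
        have hn0 : n ≠ 0 := by rintro rfl; exact hn ⟨0, by simp⟩
        refine ⟨Quot.mk _ (Units.mk0 n hn0, 1, 0), ?_⟩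
        show fM p (Units.mk0 n hn0, 1, 0) = some 0
        have hns : ¬ IsSquare (Units.mk0 n hn0 * 1) := by
          rw [mul_one]
          intro hs
          exact hn (by simpa using hs.map (Units.coeHom (ZMod p)))
        have hns' : ¬ IsSquare (Units.mk0 n hn0) := by simpa using hns
        simp [fM, hns']
      · refine ⟨Quot.mk _ (Units.mk0 v hv, 1, 1), ?_⟩
        show fM p (Units.mk0 v hv, 1, 1) = some v
        simp only [fM]
        rw [if_neg one_ne_zero]
        simp
  rw [Nat.card_eq_of_bijective G ⟨hinj, hsurj⟩, Nat.card_eq_fintype_card,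
    Fintype.card_option, ZMod.card]
end

section
/- Let p be a prime, V a finite-dimensional vector space over an algebraically closed field of characteristic zero, g : V → V a linear map with gᵖ = id, and ζ a primitive p-th root of unity. If the trace of g is zero, then all eigenspaces Vʲ = {v : g v = ζʲ v} for j = 0,…,p-1 have the same dimension; in particular p divides dim V. -/
open Polynomial Module LinearMap

/-- If `g` is a linear endomorphism of a finite-dimensional vector space over an
algebraically closed field of characteristic zero with `g ^ p = 1` (`p` prime) and
`Tr g = 0`, then all eigenspaces for the eigenvalues `ζ ^ j` (`ζ` a primitive `p`-th root
of unity) have the same dimension; in particular `p` divides `dim V`. -/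
theorem trace_zero_eigenspace_dims (p : ℕ) (hp : p.Prime) {K V : Type*} [Field K]
    [IsAlgClosed K] [CharZero K] [AddCommGroup V] [Module K V] [FiniteDimensional K V]
    (g : Module.End K V) (hg : g ^ p = 1) (ζ : K) (hζ : IsPrimitiveRoot ζ p)
    (htr : LinearMap.trace K V g = 0) :
    (∀ i j : ℕ, i < p → j < p →
        Module.finrank K (Module.End.eigenspace g (ζ ^ i)) =
          Module.finrank K (Module.End.eigenspace g (ζ ^ j))) ∧
      p ∣ Module.finrank K V := by
  classical
  have hpfact : Fact p.Prime := ⟨hp⟩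
  have hppos : 0 < p := hp.pos
  haveI : NeZero p := ⟨hppos.ne'⟩
  -- g is semisimple
  have hsep : (X ^ p - C (1 : K)).Separable := by
    simpa using Polynomial.separable_X_pow_sub_C_unit (1 : Kˣ)
      (by exact_mod_cast (Nat.cast_ne_zero (R := K)).mpr hppos.ne' |>.isUnit)
  have hss : g.IsSemisimple := by
    refine Module.End.isSemisimple_of_squarefree_aeval_eq_zero hsep.squarefree ?_
    simp [map_sub, aeval_X_pow, hg]
  -- eigenspaces coincide with max generalized eigenspaces
  have hmax : ∀ μ : K, g.maxGenEigenspace μ = g.eigenspace μ := fun μ ↦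
    hss.isFinitelySemisimple.maxGenEigenspace_eq_eigenspace μ
  have htop : ⨆ μ : K, g.eigenspace μ = ⊤ := by
    rw [← Module.End.iSup_maxGenEigenspace_eq_top g]
    exact le_antisymm (iSup_mono fun μ ↦ (hmax μ).ge) (iSup_mono fun μ ↦ (hmax μ).le)
  -- eigenvalues are powers of ζ
  have heig : ∀ μ : K, g.eigenspace μ ≠ ⊥ → ∃ j : Fin p, μ = ζ ^ (j : ℕ) := by
    intro μ hne
    have hev : Module.End.HasEigenvalue g μ := hne
    obtain ⟨v, hv⟩ := hev.exists_hasEigenvector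
    have h1 : (g ^ p) v = μ ^ p • v := hv.pow_apply p
    rw [hg] at h1
    have hμ : μ ^ p = 1 := by
      have h0 : (μ ^ p - 1) • v = 0 := by
        rw [sub_smul, one_smul, ← h1]; simp
      rcases smul_eq_zero.mp h0 with h | h
      · exact sub_eq_zero.mp h
      · exact absurd h hv.2
    obtain ⟨i, hi, hzi⟩ := hζ.eq_pow_of_pow_eq_one hμ
    exact ⟨⟨i, hi⟩, hzi.symm⟩
  -- the internal direct sum decomposition
  set N : Fin p → Submodule K V := fun j ↦ g.eigenspace (ζ ^ (j : ℕ)) with hN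
  have hindep : iSupIndep N := by
    refine (g.eigenspaces_iSupIndep).comp ?_
    intro i j hij
    exact Fin.ext (hζ.pow_inj i.2 j.2 hij)
  have hcover : ⨆ j, N j = ⊤ := by
    rw [← top_le_iff, ← htop]
    refine iSup_le fun μ ↦ ?_
    rcases eq_or_ne (g.eigenspace μ) ⊥ with h | h
    · simp [h]
    · obtain ⟨j, rfl⟩ := heig μ h
      exact le_iSup N j
  have hInt : DirectSum.IsInternal N :=
    DirectSum.isInternal_submodule_of_iSupIndep_of_iSup_eq_top hindep hcover
  -- dimension count
  set d : Fin p → ℕ := fun j ↦ finrank K (N j) with hd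
  have hdim : finrank K V = ∑ j, d j := by
    rw [(LinearEquiv.ofBijective (DirectSum.coeLinearMap N) hInt).symm.finrank_eq]
    exact Module.finrank_directSum (R := K) fun j : Fin p ↦ ↥(N j)
  -- trace computation
  have hMapsTo : ∀ j, Set.MapsTo g (N j) (N j) := fun j v hv ↦ by
    have h := (Module.End.mem_eigenspace_iff).mp hv
    show g v ∈ N j
    rw [h]; exact Submodule.smul_mem _ _ hv
  have htrace : ∑ j, (d j : K) * ζ ^ (j : ℕ) = 0 := by
    rw [trace_eq_sum_trace_restrict hInt hMapsTo] at htr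
    rw [← htr]
    refine Finset.sum_congr rfl fun j _ ↦ ?_
    have hres : g.restrict (hMapsTo j) = (ζ ^ (j : ℕ)) • (1 : Module.End K (N j)) := by
      ext ⟨v, hv⟩
      have := (Module.End.mem_eigenspace_iff).mp hv
      simp [LinearMap.restrict_apply, Subtype.ext_iff]
      exact (LinearMap.coe_restrict_apply _ _).trans this
    rw [hres, map_smul, trace_one, smul_eq_mul, mul_comm]
  -- the rational polynomial with the dimensions as coefficients
  set q : Polynomial ℚ := ∑ j : Fin p, C ((d j : ℚ)) * X ^ (j : ℕ) with hq
  have hcoeff : ∀ j : Fin p, q.coeff (j : ℕ) = (d j : ℚ) := by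
    intro j
    rw [hq, finset_sum_coeff]
    rw [Finset.sum_eq_single j]
    · simp
    · intro i _ hij
      have : (i : ℕ) ≠ (j : ℕ) := fun h ↦ hij (Fin.ext h)
      simp [coeff_C_mul, coeff_X_pow, this, Ne.symm this]
    · simp
  have haeval : aeval ζ q = 0 := by
    rw [hq, map_sum]
    rw [← htrace]
    refine Finset.sum_congr rfl fun j _ ↦ ?_
    simp [aeval_C]
  have hdvd : (∑ i ∈ Finset.range p, (X : Polynomial ℚ) ^ i) ∣ q := by
    rw [← Polynomial.cyclotomic_prime ℚ p, Polynomial.cyclotomic_eq_minpoly_rat hζ hppos]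
    exact minpoly.dvd ℚ ζ haeval
  have hΦdeg : (∑ i ∈ Finset.range p, (X : Polynomial ℚ) ^ i).natDegree = p - 1 := by
    rw [← Polynomial.cyclotomic_prime ℚ p, natDegree_cyclotomic, Nat.totient_prime hp]
  have hΦmonic : (∑ i ∈ Finset.range p, (X : Polynomial ℚ) ^ i).Monic := by
    rw [← Polynomial.cyclotomic_prime ℚ p]; exact cyclotomic.monic p ℚ
  have hqdeg : q.natDegree ≤ p - 1 := by
    refine (natDegree_sum_le _ _).trans ?_
    simp only [Finset.fold_max_le]
    constructor
    · exact Nat.zero_le _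
    · intro j _
      refine (natDegree_C_mul_le _ _).trans ?_
      rw [natDegree_X_pow]
      exact Nat.le_sub_one_of_lt j.2
  -- all dimensions are equal
  have hsame : ∀ i j : Fin p, d i = d j := by
    rcases eq_or_ne q 0 with h0 | h0
    · intro i j
      have hi := hcoeff i
      have hj := hcoeff j
      rw [h0, coeff_zero] at hi hj
      exact_mod_cast hi.symm.trans hj
    · obtain ⟨r, hr⟩ := hdvd
      have hrne : r ≠ 0 := fun h ↦ h0 (by rw [hr, h, mul_zero])
      have hdeg : q.natDegree = (p - 1) + r.natDegree := by
        rw [hr, natDegree_mul hΦmonic.ne_zero hrne, hΦdeg]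
      have hr0 : r.natDegree = 0 := by omega
      obtain ⟨c, rfl⟩ := natDegree_eq_zero.mp hr0
      have hcoeff2 : ∀ j : Fin p, (d j : ℚ) = c := by
        intro j
        rw [← hcoeff j, hr, coeff_mul_C, finset_sum_coeff]
        have h2 : ∀ i ∈ Finset.range p, ((X : Polynomial ℚ) ^ i).coeff (j : ℕ)
            = if i = (j : ℕ) then 1 else 0 := by
          intro i _
          rw [coeff_X_pow]
          simp [eq_comm]
        rw [Finset.sum_congr rfl h2, Finset.sum_ite_eq' _ _ _]
        simp [j.2]
      intro i j
      exact_mod_cast (hcoeff2 i).trans (hcoeff2 j).symm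
  constructor
  · intro i j hi hj
    exact hsame ⟨i, hi⟩ ⟨j, hj⟩
  · refine ⟨d ⟨0, hppos⟩, ?_⟩
    rw [hdim]
    rw [Finset.sum_congr rfl fun j _ ↦ hsame j ⟨0, hppos⟩]
    simp [Finset.card_univ, mul_comm]
end

section
/- Let p be an odd prime, ζ a primitive p-th root of unity in a field K, and σ : ℤ/p → Kˣ a function satisfying σ(i+j) = ζ^{c·i·j}·σ(i)·σ(j) for all i,j ∈ ℤ/p, where c ∈ ℤ/p is fixed. Then there exists q ∈ ℤ/p such that σ(i) = ζ^{i·q + i²·c/2} for all i ∈ ℤ/p, where division by 2 is taken in ℤ/p. -/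
/-- If `σ : ℤ/p → Kˣ` (`p` an odd prime) satisfies `σ (i + j) = ζ^(c i j) σ i σ j` for a
primitive `p`-th root of unity `ζ` and a fixed `c ∈ ℤ/p`, then there is `q ∈ ℤ/p` with
`σ i = ζ^(i q + i² c / 2)`. -/
theorem sigma_quadratic_form (p : ℕ) [Fact p.Prime] (hp : Odd p) {K : Type*} [Field K]
    (ζ : K) (hζ : IsPrimitiveRoot ζ p) (c : ZMod p) (σ : ZMod p → Kˣ)
    (hσ : ∀ i j : ZMod p, ((σ (i + j) : Kˣ) : K) = ζ ^ (c * i * j).val * σ i * σ j) :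
    ∃ q : ZMod p, ∀ i : ZMod p,
      ((σ i : Kˣ) : K) = ζ ^ (i * q + i ^ 2 * c / 2).val := by
  have hp1 : 0 < p := (Fact.out : p.Prime).pos
  have : NeZero p := ⟨hp1.ne'⟩
  have hz1 : ζ ^ p = 1 := hζ.pow_eq_one
  have L1 : ∀ n : ℕ, ζ ^ n = ζ ^ ((n : ZMod p)).val := by
    intro n
    rw [ZMod.val_natCast]
    conv_lhs => rw [← Nat.div_add_mod n p]
    rw [pow_add, pow_mul, hz1, one_pow, one_mul]
  have L2 : ∀ a b : ZMod p, ζ ^ (a + b).val = ζ ^ a.val * ζ ^ b.val := by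
    intro a b
    rw [← pow_add]
    rw [L1 (a.val + b.val)]
    push_cast
    rw [ZMod.natCast_val, ZMod.natCast_val, ZMod.cast_id, ZMod.cast_id]
  have h2 : (2 : ZMod p) ≠ 0 := by
    have hp2 : p ≠ 2 := by
      rintro rfl
      simp [Nat.odd_iff] at hp
    intro h
    have hd : (p : ℕ) ∣ 2 :=
      (ZMod.natCast_eq_zero_iff 2 p).mp (by exact_mod_cast h)
    exact hp2 ((Nat.prime_dvd_prime_iff_eq Fact.out Nat.prime_two).mp hd)
  have h0 : ((σ 0 : Kˣ) : K) = 1 := by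
    have h := hσ 0 0
    simp only [add_zero, mul_zero, zero_mul, ZMod.val_zero, pow_zero, one_mul] at h
    have hne : ((σ 0 : Kˣ) : K) ≠ 0 := Units.ne_zero _
    have : ((σ 0 : Kˣ) : K) * 1 = (σ 0 : Kˣ) * σ 0 := by rw [mul_one]; exact h
    exact (mul_left_cancel₀ hne this).symm
  -- key induction
  set g : ZMod p → ZMod p := fun i => i ^ 2 * c / 2 - i * (c / 2) with hg
  have claim : ∀ n : ℕ, ((σ (n : ZMod p) : Kˣ) : K)
      = ((σ 1 : Kˣ) : K) ^ n * ζ ^ (g (n : ZMod p)).val := by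
    intro n
    induction n with
    | zero =>
      simp only [Nat.cast_zero, pow_zero, one_mul, hg]
      norm_num [h0]
    | succ n ih =>
      have hcast : ((n + 1 : ℕ) : ZMod p) = (n : ZMod p) + 1 := by push_cast; ring
      rw [hcast]
      have h := hσ (n : ZMod p) 1
      rw [h, ih]
      have hexp : c * (n : ZMod p) * 1 + g (n : ZMod p) = g ((n : ZMod p) + 1) := by
        simp only [hg]
        field_simp
        ring
      rw [← hexp, L2]
      ring
  have hpow : ((σ 1 : Kˣ) : K) ^ p = 1 := by
    have h := claim p
    rw [ZMod.natCast_self] at h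
    have hg0 : g 0 = 0 := by simp [hg]
    rw [hg0, h0] at h
    simpa using h.symm
  obtain ⟨k, -, hk⟩ := hζ.eq_pow_of_pow_eq_one hpow
  refine ⟨(k : ZMod p) - c / 2, fun i => ?_⟩
  have h := claim i.val
  rw [ZMod.natCast_val, ZMod.cast_id] at h
  rw [h, ← hk, ← pow_mul, L1 (k * i.val)]
  have hc : ((k * i.val : ℕ) : ZMod p) = (k : ZMod p) * i := by
    push_cast
    rw [ZMod.natCast_val, ZMod.cast_id]
  rw [hc, ← L2]
  congr 1
  have : (k : ZMod p) * i + g i = i * ((k : ZMod p) - c / 2) + i ^ 2 * c / 2 := by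
    simp only [hg]
    ring
  rw [this]
end
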